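/- Let r ≥ 1, p ∈ [1, r], and Ω ⊂ ℝ^N open. If u_n ⇀ u weakly in L^r(Ω) and u_n → u almost everywhere in Ω, then |u_n|^p − |u_n − u|^p − |u|^p → 0 strongly in L^{r/p}(Ω). -/

import Mathlib

/-!
Write `uₙ = vₙ + u` with `vₙ → 0` a.e. For `p ≥ 1`, convexity of `t ↦ t ^ p` gives, for every
`ε > 0`, a constant `C_ε` with `||a + b|^p - |a|^p - |b|^p| ^ (r/p) ≤ ε |a|^r + C_ε |b|^r`.
With `φₙ = |uₙ|^p - |vₙ|^p - |u|^p`, the positive part of `|φₙ| ^ (r/p) - ε |vₙ|^r` is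
dominated by `C_ε |u|^r` and tends to `0` a.e., so by dominated convergence
`limsup ∫ |φₙ| ^ (r/p) ≤ ε sup ∫ |vₙ|^r`. That supremum is finite because weakly convergent
sequences are bounded: the functionals `g ↦ ∫ uₙ g` on `L^{r'}` are pointwise bounded, hence
uniformly bounded by Banach–Steinhaus, and their norms are `‖uₙ‖_r` since `g = uₙ |uₙ|^{r-2}`
attains equality in Hölder's inequality.
-/

open MeasureTheory Filter
open scoped ENNReal Topology

namespace Real

theorem add_rpow_le_one_sub_rpow_mul_add {p x y t : ℝ} (hp : 1 ≤ p) (hx : 0 ≤ x) (hy : 0 ≤ y)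
    (ht₀ : 0 < t) (ht₁ : t < 1) :
    (x + y) ^ p ≤ (1 - t) ^ (1 - p) * x ^ p + t ^ (1 - p) * y ^ p := by
  have hs : 0 < 1 - t := by linarith
  have h := (convexOn_rpow hp).2 (Set.mem_Ici.2 (div_nonneg hx hs.le))
    (Set.mem_Ici.2 (div_nonneg hy ht₀.le)) hs.le ht₀.le (by ring)
  simp only [smul_eq_mul, mul_div_cancel₀ _ hs.ne', mul_div_cancel₀ _ ht₀.ne',
    div_rpow hx hs.le, div_rpow hy ht₀.le] at h
  rw [rpow_sub hs, rpow_sub ht₀, rpow_one, rpow_one]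
  calc (x + y) ^ p ≤ (1 - t) * (x ^ p / (1 - t) ^ p) + t * (y ^ p / t ^ p) := h
    _ = _ := by ring

theorem add_rpow_le_two_mul_rpow_add_two_mul_rpow {q x y : ℝ} (hq : 0 ≤ q) (hx : 0 ≤ x)
    (hy : 0 ≤ y) : (x + y) ^ q ≤ (2 * x) ^ q + (2 * y) ^ q := by
  rcases le_total x y with hxy | hxy
  · exact (rpow_le_rpow (by positivity) (by linarith) hq).trans
      (le_add_of_nonneg_left (by positivity))
  · exact (rpow_le_rpow (by positivity) (by linarith) hq).trans
      (le_add_of_nonneg_right (by positivity))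

theorem enorm_rpow_eq_ofReal {s : ℝ} (hs : 0 ≤ s) (y : ℝ) :
    ‖y‖ₑ ^ s = ENNReal.ofReal (|y| ^ s) := by
  rw [enorm_eq_ofReal_abs, ENNReal.ofReal_rpow_of_nonneg (abs_nonneg y) hs]

end Real

section BrezisLiebDefect

open Real

noncomputable def brezisLiebDefect (p a b : ℝ) : ℝ := |a + b| ^ p - |a| ^ p - |b| ^ p

theorem abs_brezisLiebDefect_le {p t : ℝ} (hp : 1 ≤ p) (ht₀ : 0 < t) (ht₁ : t < 1) (a b : ℝ) :
    |brezisLiebDefect p a b| ≤ ((1 - t) ^ (1 - p) - 1) * |a| ^ p + (t ^ (1 - p) + 1) * |b| ^ p := by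
  have hc : 1 ≤ (1 - t) ^ (1 - p) :=
    one_le_rpow_of_pos_of_le_one_of_nonpos (by linarith) (by linarith) (by linarith)
  have hK : 0 ≤ t ^ (1 - p) := by positivity
  have hA : 0 ≤ |a| ^ p := by positivity
  have hB : 0 ≤ |b| ^ p := by positivity
  have hX : 0 ≤ |a + b| ^ p := by positivity
  have hupper : |a + b| ^ p ≤ (1 - t) ^ (1 - p) * |a| ^ p + t ^ (1 - p) * |b| ^ p :=
    (rpow_le_rpow (abs_nonneg _) (abs_add_le a b) (by linarith)).trans
      (add_rpow_le_one_sub_rpow_mul_add hp (abs_nonneg a) (abs_nonneg b) ht₀ ht₁)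
  have hlower : |a| ^ p ≤ (1 - t) ^ (1 - p) * |a + b| ^ p + t ^ (1 - p) * |b| ^ p := by
    refine (rpow_le_rpow (abs_nonneg _) ?_ (by linarith)).trans
      (add_rpow_le_one_sub_rpow_mul_add hp (abs_nonneg (a + b)) (abs_nonneg b) ht₀ ht₁)
    simpa using abs_add_le (a + b) (-b)
  rw [brezisLiebDefect, abs_le]
  constructor
  · nlinarith [mul_nonneg (mul_nonneg (sub_nonneg.2 hc) (sub_nonneg.2 hc)) hA,
      mul_nonneg (mul_nonneg (sub_nonneg.2 hc) hK) hB]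
  · nlinarith

theorem exists_abs_brezisLiebDefect_rpow_le {p q ε : ℝ} (hp : 1 ≤ p) (hq : 0 < q) (hε : 0 < ε) :
    ∃ C, 0 ≤ C ∧ ∀ a b : ℝ,
      |brezisLiebDefect p a b| ^ q ≤ ε * |a| ^ (p * q) + C * |b| ^ (p * q) := by
  set δ := ε ^ q⁻¹ / 2 with hδ
  have hδ₀ : 0 < δ := by positivity
  have hlim : Tendsto (fun t : ℝ => (1 - t) ^ (1 - p)) (𝓝[>] 0) (𝓝 1) := by
    have : ContinuousAt (fun t : ℝ => (1 - t) ^ (1 - p)) 0 :=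
      (continuousAt_const.sub continuousAt_id).rpow_const (Or.inl (by norm_num))
    simpa using this.tendsto.mono_left nhdsWithin_le_nhds
  obtain ⟨t, hδt, ht₀, ht₁⟩ := ((hlim.eventually (gt_mem_nhds (lt_add_of_pos_right 1 hδ₀))).and
    (Ioo_mem_nhdsGT one_pos)).exists
  set K := t ^ (1 - p) + 1
  have hK : 0 ≤ K := by positivity
  refine ⟨(2 * K) ^ q, by positivity, fun a b => ?_⟩
  have hA : 0 ≤ |a| ^ p := by positivity
  have hB : 0 ≤ |b| ^ p := by positivity
  have hφ : |brezisLiebDefect p a b| ≤ δ * |a| ^ p + K * |b| ^ p :=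
    (abs_brezisLiebDefect_le hp ht₀ ht₁ a b).trans (by gcongr; linarith)
  calc |brezisLiebDefect p a b| ^ q ≤ (δ * |a| ^ p + K * |b| ^ p) ^ q := by gcongr
    _ ≤ (2 * (δ * |a| ^ p)) ^ q + (2 * (K * |b| ^ p)) ^ q :=
      add_rpow_le_two_mul_rpow_add_two_mul_rpow hq.le (by positivity) (by positivity)
    _ = ε * |a| ^ (p * q) + (2 * K) ^ q * |b| ^ (p * q) := by
      rw [← mul_assoc, ← mul_assoc, mul_rpow (by positivity) hA, mul_rpow (by positivity) hB,
        rpow_mul (abs_nonneg a), rpow_mul (abs_nonneg b), hδ, mul_div_cancel₀ _ two_ne_zero,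
        rpow_inv_rpow hε.le hq.ne']

end BrezisLiebDefect

namespace MeasureTheory

variable {α : Type*} [MeasurableSpace α] {μ : Measure α}

theorem lintegral_enorm_rpow_eq_eLpNorm_rpow {E : Type*} [NormedAddCommGroup E] {f : α → E}
    {s : ℝ} (hs : 0 < s) : ∫⁻ x, ‖f x‖ₑ ^ s ∂μ = eLpNorm f (.ofReal s) μ ^ s := by
  rw [eLpNorm_eq_eLpNorm' (by simpa using hs) ENNReal.ofReal_ne_top, ENNReal.toReal_ofReal hs.le,
    lintegral_rpow_enorm_eq_rpow_eLpNorm' hs]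

theorem tendsto_lintegral_zero_of_le_mul_add {f g : ℕ → α → ℝ≥0∞} {M : ℝ≥0∞} (hM : M ≠ ∞)
    (hf : ∀ n, AEMeasurable (f n) μ) (hg : ∀ n, AEMeasurable (g n) μ)
    (hgM : ∀ n, ∫⁻ x, g n x ∂μ ≤ M) (hf₀ : ∀ᵐ x ∂μ, Tendsto (fun n => f n x) atTop (𝓝 0))
    (hdom : ∀ ε : ℝ, 0 < ε → ∃ h : α → ℝ≥0∞, ∫⁻ x, h x ∂μ ≠ ∞ ∧
      ∀ n x, f n x ≤ ENNReal.ofReal ε * g n x + h x) :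
    Tendsto (fun n => ∫⁻ x, f n x ∂μ) atTop (𝓝 0) := by
  rw [ENNReal.tendsto_atTop_zero]
  intro η hη
  have hη₂ : 0 < η / 2 := ENNReal.half_pos hη.ne'
  have hsmall : Tendsto (fun ε : ℝ => ENNReal.ofReal ε * M) (𝓝[>] 0) (𝓝 0) := by
    simpa using ENNReal.Tendsto.mul_const
      ((ENNReal.tendsto_ofReal (tendsto_id (x := 𝓝 (0 : ℝ)))).mono_left
        (nhdsWithin_le_nhds (s := Set.Ioi 0))) (Or.inr hM)
  obtain ⟨ε, hεM, hε⟩ := ((hsmall.eventually (gt_mem_nhds hη₂)).and self_mem_nhdsWithin).exists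
  obtain ⟨h, hh, hfh⟩ := hdom ε hε
  -- truncated subtraction in `ℝ≥0∞` is the positive part of `f n - ε * g n`, dominated by `h`
  have hψ : Tendsto (fun n => ∫⁻ x, f n x - ENNReal.ofReal ε * g n x ∂μ) atTop (𝓝 0) := by
    simpa using tendsto_lintegral_of_dominated_convergence' h
      (fun n => (hf n).sub ((hg n).const_mul _))
      (fun n => ae_of_all _ fun x => tsub_le_iff_left.2 (hfh n x)) hh
      (hf₀.mono fun x hx => tendsto_of_tendsto_of_tendsto_of_le_of_le tendsto_const_nhds hx
        (fun n => zero_le) (fun n => tsub_le_self))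
  obtain ⟨N, hN⟩ := eventually_atTop.1 (hψ.eventually (gt_mem_nhds hη₂))
  refine ⟨N, fun n hn => ?_⟩
  calc ∫⁻ x, f n x ∂μ
      ≤ ∫⁻ x, (f n x - ENNReal.ofReal ε * g n x) + ENNReal.ofReal ε * g n x ∂μ :=
        lintegral_mono fun x => le_tsub_add
    _ = ∫⁻ x, f n x - ENNReal.ofReal ε * g n x ∂μ + ENNReal.ofReal ε * ∫⁻ x, g n x ∂μ := by
        rw [lintegral_add_right' _ ((hg n).const_mul _),
          lintegral_const_mul' _ _ ENNReal.ofReal_ne_top]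
    _ ≤ η / 2 + η / 2 := add_le_add (hN n hn).le ((mul_le_mul_right (hgM n) _).trans hεM.le)
    _ = η := ENNReal.add_halves η

theorem tendsto_eLpNorm_brezisLieb {p r : ℝ} (hp : 1 ≤ p) (hr : 0 < r) {u : ℕ → α → ℝ}
    {v : α → ℝ} {C : ℝ≥0∞} (hC : C ≠ ∞) (hu : ∀ n, AEStronglyMeasurable (u n) μ)
    (huC : ∀ n, eLpNorm (u n) (.ofReal r) μ ≤ C) (hv : MemLp v (.ofReal r) μ)
    (hae : ∀ᵐ x ∂μ, Tendsto (fun n => u n x) atTop (𝓝 (v x))) :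
    Tendsto (fun n => eLpNorm (fun x => |u n x| ^ p - |u n x - v x| ^ p - |v x| ^ p)
      (.ofReal (r / p)) μ) atTop (𝓝 0) := by
  have hp₀ : 0 < p := by linarith
  have hq : 0 < r / p := div_pos hr hp₀
  have hpq : p * (r / p) = r := mul_div_cancel₀ r hp₀.ne'
  set R := ENNReal.ofReal r
  suffices h : Tendsto
      (fun n => ∫⁻ x, ‖|u n x| ^ p - |u n x - v x| ^ p - |v x| ^ p‖ₑ ^ (r / p) ∂μ) atTop (𝓝 0) by
    have hcont := (ENNReal.continuous_rpow_const (y := 1 / (r / p))).tendsto 0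
    rw [ENNReal.zero_rpow_of_pos (by positivity)] at hcont
    simpa only [eLpNorm_eq_lintegral_rpow_enorm_toReal (by simpa using hq) ENNReal.ofReal_ne_top,
      ENNReal.toReal_ofReal hq.le, Function.comp_def] using hcont.comp h
  refine tendsto_lintegral_zero_of_le_mul_add (g := fun n x => ‖u n x - v x‖ₑ ^ r)
    (M := (ENNReal.LpAddConst R * (C + eLpNorm v R μ)) ^ r) ?_ (fun n => ?_) (fun n => ?_)
    (fun n => ?_) ?_ (fun ε hε => ?_)
  · exact ENNReal.rpow_ne_top_of_nonneg hr.le (ENNReal.mul_ne_top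
      (ENNReal.LpAddConst_lt_top _).ne (ENNReal.add_ne_top.2 ⟨hC, hv.eLpNorm_ne_top⟩))
  · have := hu n
    have := hv.1
    fun_prop (disch := positivity)
  · have := hu n
    have := hv.1
    fun_prop
  · rw [lintegral_enorm_rpow_eq_eLpNorm_rpow hr]
    exact ENNReal.rpow_le_rpow ((eLpNorm_sub_le' (hu n) hv.1 R).trans (by gcongr; exact huC n))
      hr.le
  · filter_upwards [hae] with x hx
    have hc : Continuous fun t : ℝ => ‖|t| ^ p - |t - v x| ^ p - |v x| ^ p‖ₑ ^ (r / p) := by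
      fun_prop (disch := positivity)
    simpa [Real.zero_rpow hp₀.ne', ENNReal.zero_rpow_of_pos hq, Function.comp_def] using
      (hc.tendsto (v x)).comp hx
  · obtain ⟨K, hK, hφ⟩ := exists_abs_brezisLiebDefect_rpow_le hp hq hε
    refine ⟨fun x => ENNReal.ofReal K * ‖v x‖ₑ ^ r, ?_, fun n x => ?_⟩
    · rw [lintegral_const_mul' _ _ ENNReal.ofReal_ne_top,
        lintegral_enorm_rpow_eq_eLpNorm_rpow hr]
      exact ENNReal.mul_ne_top ENNReal.ofReal_ne_top
        (ENNReal.rpow_ne_top_of_nonneg hr.le hv.eLpNorm_ne_top)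
    · have := hφ (u n x - v x) (v x)
      rw [brezisLiebDefect, sub_add_cancel, hpq] at this
      simp only [Real.enorm_rpow_eq_ofReal hq.le, Real.enorm_rpow_eq_ofReal hr.le,
        ← ENNReal.ofReal_mul hε.le, ← ENNReal.ofReal_mul hK]
      rw [← ENNReal.ofReal_add (by positivity) (by positivity)]
      exact ENNReal.ofReal_le_ofReal this

theorem eLpNorm_norm_rpow_sub_one_conjExponent_le {E : Type*} [NormedAddCommGroup E]
    {p : ℝ≥0∞} (hp₁ : 1 ≤ p) (hp : p ≠ ∞) (f : α → E) :
    eLpNorm (fun x => ‖f x‖ ^ (p.toReal - 1)) p.conjExponent μ ≤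
      eLpNorm f p μ ^ (p.toReal - 1) := by
  rcases hp₁.eq_or_lt with rfl | hp₁
  · simpa [ENNReal.conjExponent] using eLpNorm_le_of_ae_bound (p := ∞) (μ := μ)
      (f := fun _ : α => (1 : ℝ)) (ae_of_all _ fun _ => le_of_eq norm_one)
  have hr : 0 < p.toReal - 1 := by
    rw [sub_pos, ← ENNReal.toReal_one]
    exact ENNReal.toReal_strict_mono hp hp₁
  have hpq : p.HolderConjugate p.conjExponent := .conjExponent hp₁.le
  have hp' : p.conjExponent ≠ ∞ := by
    simpa [ENNReal.conjExponent] using (tsub_pos_of_lt hp₁).ne'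
  rw [eLpNorm_norm_rpow f hr, ENNReal.ofReal_sub _ zero_le_one, ENNReal.ofReal_toReal hp,
    ENNReal.ofReal_one, ← hpq.div_conj_eq_sub_one,
    ENNReal.mul_div_cancel hpq.symm.ne_zero hp']

theorem MemLp.exists_integral_mul_eq_toReal_eLpNorm {p : ℝ≥0∞} (hp₁ : 1 ≤ p) (hp : p ≠ ∞)
    {f : α → ℝ} (hf : MemLp f p μ) :
    ∃ g : α → ℝ, MemLp g p.conjExponent μ ∧ eLpNorm g p.conjExponent μ ≤ 1 ∧
      ∫ x, f x * g x ∂μ = (eLpNorm f p μ).toReal := by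
  set r := p.toReal
  have hr : 1 ≤ r := by simpa [r] using ENNReal.toReal_mono hp hp₁
  set A := (eLpNorm f p μ).toReal
  have hA : 0 ≤ A := ENNReal.toReal_nonneg
  set g₀ : α → ℝ := fun x => f x * ‖f x‖ ^ (r - 2)
  have hg₀_norm : ∀ x, ‖g₀ x‖ ≤ ‖f x‖ ^ (r - 1) := by
    intro x
    rcases eq_or_ne (f x) 0 with hx | hx
    · simp only [g₀, hx, zero_mul, norm_zero]
      positivity
    · have hx' : 0 < ‖f x‖ := norm_pos_iff.2 hx
      rw [norm_mul, Real.norm_of_nonneg (Real.rpow_nonneg (norm_nonneg (f x)) _),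
        show r - 1 = 1 + (r - 2) by ring, Real.rpow_add hx', Real.rpow_one]
  have hfg₀ : ∀ x, f x * g₀ x = ‖f x‖ ^ r := by
    intro x
    rcases eq_or_ne (f x) 0 with hx | hx
    · simp [g₀, hx, Real.zero_rpow (by linarith : r ≠ 0)]
    · have hx' : 0 < ‖f x‖ := norm_pos_iff.2 hx
      rw [← mul_assoc, show r = 2 + (r - 2) by ring, Real.rpow_add hx', Real.rpow_two,
        Real.norm_eq_abs, sq_abs, sq, add_sub_cancel_left]
  have hg₀_le : eLpNorm g₀ p.conjExponent μ ≤ ENNReal.ofReal (A ^ (r - 1)) := by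
    refine (eLpNorm_mono_real hg₀_norm).trans
      ((eLpNorm_norm_rpow_sub_one_conjExponent_le hp₁ hp f).trans ?_)
    rw [← ENNReal.ofReal_rpow_of_nonneg hA (by linarith), ENNReal.ofReal_toReal hf.eLpNorm_ne_top]
  have hg₀ : MemLp g₀ p.conjExponent μ :=
    ⟨hf.1.mul (hf.1.norm.aemeasurable.pow_const _).aestronglyMeasurable,
      hg₀_le.trans_lt ENNReal.ofReal_lt_top⟩
  have hint : ∫ x, f x * g₀ x ∂μ = A ^ r := by
    simp_rw [hfg₀]
    rw [← Real.rpow_inv_rpow (integral_nonneg fun x => by positivity) (by linarith : r ≠ 0),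
      ← lpNorm_eq_integral_norm_rpow_toReal (by positivity) hp hf.1, ← toReal_eLpNorm hf.1]
  refine ⟨fun x => A ^ (1 - r) * g₀ x, hg₀.const_mul _, ?_, ?_⟩
  · have hc : A ^ (1 - r) * A ^ (r - 1) ≤ 1 := by
      rcases hA.eq_or_lt with hA₀ | hA₀
      · rw [← hA₀]
        exact mul_le_one₀ (Real.zero_rpow_le_one _) (by positivity) (Real.zero_rpow_le_one _)
      · rw [← Real.rpow_add hA₀, show 1 - r + (r - 1) = 0 by ring, Real.rpow_zero]
    calc eLpNorm (fun x => A ^ (1 - r) * g₀ x) p.conjExponent μ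
        = ‖A ^ (1 - r)‖ₑ * eLpNorm g₀ p.conjExponent μ := by
          rw [← eLpNorm_const_smul]
          rfl
      _ ≤ ENNReal.ofReal (A ^ (1 - r)) * ENNReal.ofReal (A ^ (r - 1)) := by
          rw [Real.enorm_of_nonneg (by positivity)]
          gcongr
      _ ≤ 1 := by
          rw [← ENNReal.ofReal_mul (by positivity)]
          exact ENNReal.ofReal_le_one.2 hc
  · simp_rw [mul_left_comm (f _), integral_const_mul, hint]
    rw [← Real.rpow_add' hA (by norm_num), sub_add_cancel, Real.rpow_one]

theorem exists_eLpNorm_le_of_bddAbove_abs_integral_mul {p : ℝ≥0∞} (hp₁ : 1 ≤ p) (hp : p ≠ ∞)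
    {u : ℕ → α → ℝ} (hu : ∀ n, MemLp (u n) p μ)
    (hbdd : ∀ g, MemLp g p.conjExponent μ →
      BddAbove (Set.range fun n => |∫ x, u n x * g x ∂μ|)) :
    ∃ C : ℝ≥0∞, C ≠ ∞ ∧ ∀ n, eLpNorm (u n) p μ ≤ C := by
  have : Fact (1 ≤ p) := ⟨hp₁⟩
  have : Fact (1 ≤ p.conjExponent) := ⟨(ENNReal.HolderConjugate.conjExponent hp₁).symm.one_le⟩
  let T n := (ContinuousLinearMap.mul ℝ ℝ).lpPairing μ p p.conjExponent ((hu n).toLp (u n))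
  have hT : ∀ n {g : α → ℝ} (hg : MemLp g p.conjExponent μ),
      T n (hg.toLp g) = ∫ x, u n x * g x ∂μ := by
    intro n g hg
    rw [ContinuousLinearMap.lpPairing_eq_integral]
    refine integral_congr_ae ?_
    filter_upwards [(hu n).coeFn_toLp, hg.coeFn_toLp] with x hux hgx
    simp [hux, hgx]
  obtain ⟨C, hC⟩ := banach_steinhaus (g := T) fun g => by
    obtain ⟨C, hC⟩ := hbdd g (Lp.memLp g)
    refine ⟨C, fun n => ?_⟩
    rw [← Lp.toLp_coeFn g (Lp.memLp g), hT n (Lp.memLp g)]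
    exact hC ⟨n, rfl⟩
  refine ⟨ENNReal.ofReal C, ENNReal.ofReal_ne_top, fun n => ?_⟩
  obtain ⟨g, hg, hg₁, hug⟩ := (hu n).exists_integral_mul_eq_toReal_eLpNorm hp₁ hp
  rw [← ENNReal.ofReal_toReal (hu n).eLpNorm_ne_top]
  refine ENNReal.ofReal_le_ofReal ?_
  have hC₀ : 0 ≤ C := (norm_nonneg _).trans (hC n)
  calc (eLpNorm (u n) p μ).toReal = T n (hg.toLp g) := by rw [hT n hg, hug]
    _ ≤ ‖T n‖ * ‖hg.toLp g‖ := (le_abs_self _).trans ((T n).le_opNorm _)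
    _ ≤ C * 1 := by
      gcongr
      · exact hC n
      · rw [Lp.norm_toLp]
        exact ENNReal.toReal_le_of_le_ofReal zero_le_one (by simpa using hg₁)
    _ = C := mul_one C

end MeasureTheory

theorem stmt_4_general (N : ℕ) (Ω : Set (EuclideanSpace ℝ (Fin N)))
    (r p : ℝ) (hr : 1 ≤ r) (hp1 : 1 ≤ p)
    (u : ℕ → EuclideanSpace ℝ (Fin N) → ℝ) (ulim : EuclideanSpace ℝ (Fin N) → ℝ)
    -- uₙ, u ∈ L^r(Ω)
    (hu : ∀ n, MemLp (u n) (ENNReal.ofReal r) (volume.restrict Ω))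
    (hul : MemLp ulim (ENNReal.ofReal r) (volume.restrict Ω))
    -- uₙ ⇀ u weakly in L^r(Ω): tested against every g in the dual space L^{r'}(Ω)
    (hweak : ∀ g : EuclideanSpace ℝ (Fin N) → ℝ,
      MemLp g (ENNReal.ofReal r).conjExponent (volume.restrict Ω) →
      Tendsto (fun n => ∫ x in Ω, u n x * g x) atTop (nhds (∫ x in Ω, ulim x * g x)))
    -- uₙ → u almost everywhere in Ω
    (hae : ∀ᵐ x ∂(volume.restrict Ω), Tendsto (fun n => u n x) atTop (nhds (ulim x))) :
    Tendsto
      (fun n => eLpNorm (fun x => |u n x| ^ p - |u n x - ulim x| ^ p - |ulim x| ^ p)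
        (ENNReal.ofReal (r / p)) (volume.restrict Ω))
      atTop (nhds 0) := by
  obtain ⟨C, hC, huC⟩ := exists_eLpNorm_le_of_bddAbove_abs_integral_mul
    (ENNReal.one_le_ofReal.2 hr) ENNReal.ofReal_ne_top hu
    fun g hg => (hweak g hg).abs.bddAbove_range
  exact tendsto_eLpNorm_brezisLieb hp1 (by linarith) hC (fun n => (hu n).1) huC hul hae

/-- Brézis–Lieb type lemma: let `r ≥ 1`, `p ∈ [1, r]`, `Ω ⊂ ℝᴺ` open. If `uₙ ⇀ u`
weakly in `L^r(Ω)` and `uₙ → u` a.e. in `Ω`, then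
`|uₙ|^p − |uₙ − u|^p − |u|^p → 0` strongly in `L^{r/p}(Ω)`. -/
theorem stmt_4 (N : ℕ) (Ω : Set (EuclideanSpace ℝ (Fin N))) (hΩ : IsOpen Ω)
    (r p : ℝ) (hr : 1 ≤ r) (hp1 : 1 ≤ p) (hpr : p ≤ r)
    (u : ℕ → EuclideanSpace ℝ (Fin N) → ℝ) (ulim : EuclideanSpace ℝ (Fin N) → ℝ)
    -- uₙ, u ∈ L^r(Ω)
    (hu : ∀ n, MemLp (u n) (ENNReal.ofReal r) (volume.restrict Ω))
    (hul : MemLp ulim (ENNReal.ofReal r) (volume.restrict Ω))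
    -- uₙ ⇀ u weakly in L^r(Ω): tested against every g in the dual space L^{r'}(Ω)
    (hweak : ∀ g : EuclideanSpace ℝ (Fin N) → ℝ,
      MemLp g (ENNReal.ofReal r).conjExponent (volume.restrict Ω) →
      Tendsto (fun n => ∫ x in Ω, u n x * g x) atTop (nhds (∫ x in Ω, ulim x * g x)))
    -- uₙ → u almost everywhere in Ω
    (hae : ∀ᵐ x ∂(volume.restrict Ω), Tendsto (fun n => u n x) atTop (nhds (ulim x))) :
    Tendsto
      (fun n => eLpNorm (fun x => |u n x| ^ p - |u n x - ulim x| ^ p - |ulim x| ^ p)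
        (ENNReal.ofReal (r / p)) (volume.restrict Ω))
      atTop (nhds 0) :=
  stmt_4_general N Ω r p hr hp1 u ulim hu hul hweak hae
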